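/- The beta invariant β(M) = (−1)^{r(M)} Σ_{X⊆E} (−1)^{|X|} r(X) of a matroid M with at least 2 elements equals the coefficient b_{10} of x in the Tutte polynomial T_M(x,y) = Σ_{A⊆E} (x−1)^{r(E)−r(A)} (y−1)^{|A|−r(A)}. -/

import Mathlib

/-!
The coefficient of `x` in `(x - 1)^a (y - 1)^b` is `-a (-1)^(a+b)`. For the term of `A ⊆ E`,
`a = r(E) - r(A)` and `b = |A| - r(A)`, so `a + b ≡ r(E) + |A| (mod 2)` and
`b₁₀ = (-1)^r(E) ∑_{A ⊆ E} (-1)^|A| (r(A) - r(E))`; the truncated subtractions in the exponents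
are exact because `r(A) ≤ r(E)` and `r(A) ≤ |A|`. The part carrying `r(E)` vanishes: the
alternating sum over the subsets of a nonempty set is `0`, and `r(∅) = 0`.
-/

open Finset MvPolynomial
open scoped Classical

/-- The Tutte polynomial `T_M(x,y) = ∑_{A⊆E} (x−1)^{r(E)−r(A)} (y−1)^{|A|−r(A)}`
as a polynomial in two variables `X 0 = x`, `X 1 = y`. -/
noncomputable def tutte {α : Type*} [DecidableEq α] (E : Finset α)
    (r : Finset α → ℕ) : MvPolynomial (Fin 2) ℤ :=
  ∑ A ∈ E.powerset, (X 0 - 1) ^ (r E - r A) * (X 1 - 1) ^ (A.card - r A)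

/-- The beta invariant `β(M) = (−1)^{r(E)} ∑_{X⊆E} (−1)^{|X|} r(X)`. -/
def betaInv {α : Type*} [DecidableEq α] (E : Finset α) (r : Finset α → ℕ) : ℤ :=
  (-1) ^ (r E) * ∑ X ∈ E.powerset, (-1) ^ X.card * (r X : ℤ)

namespace MvPolynomial

variable {σ R : Type*} (i : σ)

section CommSemiring

variable [CommSemiring R]

theorem coeff_single_one_one : coeff (Finsupp.single i 1) (1 : MvPolynomial σ R) = 0 :=
  (coeff_one _).trans (if_neg (Finsupp.single_ne_zero.2 one_ne_zero).symm)

theorem coeff_single_one_mul (p q : MvPolynomial σ R) :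
    coeff (Finsupp.single i 1) (p * q) =
      coeff (Finsupp.single i 1) p * constantCoeff q +
        constantCoeff p * coeff (Finsupp.single i 1) q := by
  rw [coeff_mul, Finsupp.antidiagonal_single, sum_map,
    Nat.sum_antidiagonal_eq_sum_range_succ_mk, sum_range_succ, sum_range_one]
  simp [constantCoeff_eq, add_comm]

theorem coeff_single_one_pow (p : MvPolynomial σ R) (n : ℕ) :
    coeff (Finsupp.single i 1) (p ^ n) =
      n * constantCoeff p ^ (n - 1) * coeff (Finsupp.single i 1) p := by
  induction n with
  | zero => simp [coeff_single_one_one]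
  | succ n ih =>
    rw [pow_succ, coeff_single_one_mul, ih, map_pow]
    rcases n with _ | n
    · simp
    · simp [pow_succ]
      ring

end CommSemiring

variable [CommRing R]

theorem coeff_single_one_X_sub_one_pow (n : ℕ) :
    coeff (Finsupp.single i 1) ((X i - 1 : MvPolynomial σ R) ^ n) = -n * (-1) ^ n := by
  rw [coeff_single_one_pow]
  rcases n with _ | n
  · simp
  · simp [coeff_X, coeff_single_one_one, pow_succ]
    ring

theorem coeff_single_one_X_sub_one_pow_of_ne {j : σ} (hji : j ≠ i) (n : ℕ) :
    coeff (Finsupp.single i 1) ((X j - 1 : MvPolynomial σ R) ^ n) = 0 := by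
  rw [coeff_single_one_pow]
  simp [coeff_X, coeff_single_one_one, Finsupp.single_eq_single_iff, hji]

theorem coeff_single_one_X_sub_one_pow_mul_X_sub_one_pow {j : σ} (hji : j ≠ i) (a b : ℕ) :
    coeff (Finsupp.single i 1) ((X i - 1 : MvPolynomial σ R) ^ a * (X j - 1) ^ b) =
      -(a : R) * (-1) ^ (a + b) := by
  rw [coeff_single_one_mul, coeff_single_one_X_sub_one_pow,
    coeff_single_one_X_sub_one_pow_of_ne _ hji]
  simp [pow_add, mul_assoc]

end MvPolynomial

theorem neg_one_pow_tsub_add_tsub {M : Type*} [Monoid M] [HasDistribNeg M] {k m n : ℕ}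
    (hm : k ≤ m) (hn : k ≤ n) : (-1 : M) ^ (m - k + (n - k)) = (-1) ^ (m + n) := by
  obtain ⟨m, rfl⟩ := Nat.exists_eq_add_of_le hm
  obtain ⟨n, rfl⟩ := Nat.exists_eq_add_of_le hn
  rw [show k + m + (k + n) = m + n + 2 * k by ring, pow_add _ (m + n), pow_mul]
  simp

theorem coeff_single_zero_one_tutte {α : Type*} [DecidableEq α] {E : Finset α}
    {r : Finset α → ℕ} (hcard : ∀ A, r A ≤ A.card) (hmono : ∀ A B, A ⊆ B → r A ≤ r B) :
    coeff (Finsupp.single 0 1) (tutte E r) =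
      (-1) ^ r E * ∑ A ∈ E.powerset, (-1) ^ A.card * ((r A : ℤ) - r E) := by
  rw [tutte, coeff_sum, mul_sum]
  refine sum_congr rfl fun A hA => ?_
  have hAE := hmono A E (mem_powerset.1 hA)
  rw [coeff_single_one_X_sub_one_pow_mul_X_sub_one_pow _ Fin.zero_ne_one.symm,
    neg_one_pow_tsub_add_tsub hAE (hcard A), Nat.cast_sub hAE, pow_add]
  ring

theorem betaInv_eq_tutte_coeff_general {α : Type*} [DecidableEq α]
    (E : Finset α) (r : Finset α → ℕ)
    (hcard : ∀ A, r A ≤ A.card)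
    (hmono : ∀ A B, A ⊆ B → r A ≤ r B) :
    betaInv E r = MvPolynomial.coeff (Finsupp.single 0 1) (tutte E r) := by
  have hrank_alternating : (r E : ℤ) * ∑ A ∈ E.powerset, (-1) ^ A.card = 0 := by
    rw [sum_powerset_neg_one_pow_card]
    split_ifs with hE
    · simpa [hE] using hcard ∅
    · simp
  rw [coeff_single_zero_one_tutte hcard hmono, betaInv]
  congr 1
  rw [← sub_zero (∑ A ∈ E.powerset, (-1) ^ A.card * (r A : ℤ)), ← hrank_alternating, mul_sum,
    ← sum_sub_distrib]
  exact sum_congr rfl fun A _ => by ring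

/-- For a matroid with at least 2 elements, the beta invariant equals the
coefficient `b_{10}` of `x` in the Tutte polynomial. -/
theorem betaInv_eq_tutte_coeff {α : Type*} [DecidableEq α]
    (E : Finset α) (r : Finset α → ℕ)
    (hcard : ∀ A, r A ≤ A.card)
    (hmono : ∀ A B, A ⊆ B → r A ≤ r B)
    (hsub : ∀ A B, r (A ∪ B) + r (A ∩ B) ≤ r A + r B)
    (hE : ∀ A, r (A ∩ E) = r A)
    (hcard2 : 2 ≤ E.card) :
    betaInv E r = MvPolynomial.coeff (Finsupp.single 0 1) (tutte E r) :=
  betaInv_eq_tutte_coeff_general E r hcard hmono
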